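/- Let B be an n×n real matrix with a QR factorization B = V·R, where V is orthogonal and R is upper triangular, and let 1 ≤ r ≤ n be such that the leading block R(1:r,1:r) is invertible. Then σ_min(V(1:r,1:r)) ≥ σ_min(B(1:r,1:r)) / ‖B(1:n,1:r)‖_F, where B(1:n,1:r) denotes the first r columns of B (which are nonzero, so the quotient is well defined). -/

import Mathlib

/-!
Since `R` is upper triangular, the leading block of `B = V R` is `B₁ = V₁ R₁`, so
`V₁ = B₁ R₁⁻¹`. For a unit vector `x` put `y = R₁⁻¹ x`; then
`‖V₁ x‖ = ‖B₁ y‖ ≥ σ_min(B₁) ‖y‖`, while `1 = ‖R₁ y‖ ≤ ‖R₁‖_F ‖y‖`. Finally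
`‖R₁‖_F` is at most the Frobenius norm of the first `r` columns of `R`, which equals
that of the first `r` columns of `B` because `V` is orthogonal.
-/

open Matrix

/-- The Euclidean norm of a real vector. -/
noncomputable def euclNorm {n : Type*} [Fintype n] (v : n → ℝ) : ℝ :=
  Real.sqrt (v ⬝ᵥ v)

/-- The smallest singular value of a real matrix: the infimum of `‖M·x‖₂` over
Euclidean-unit vectors `x`. -/
noncomputable def sigmaMin {m n : Type*} [Fintype m] [Fintype n]
    (M : Matrix m n ℝ) : ℝ :=
  sInf {t | ∃ x : n → ℝ, euclNorm x = 1 ∧ t = euclNorm (M *ᵥ x)}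

/-- The Frobenius norm of a real matrix. -/
noncomputable def frobNorm {m n : Type*} [Fintype m] [Fintype n]
    (M : Matrix m n ℝ) : ℝ :=
  Real.sqrt (∑ i, ∑ j, M i j ^ 2)

section Norms

variable {m n : Type*} [Fintype m] [Fintype n]

lemma euclNorm_eq_sqrt_sum_sq (v : n → ℝ) : euclNorm v = Real.sqrt (∑ i, v i ^ 2) := by
  simp only [euclNorm, dotProduct, sq]

lemma euclNorm_nonneg (v : n → ℝ) : 0 ≤ euclNorm v := Real.sqrt_nonneg _

lemma euclNorm_eq_zero_iff {v : n → ℝ} : euclNorm v = 0 ↔ v = 0 := by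
  rw [euclNorm, Real.sqrt_eq_zero (by simpa using dotProduct_self_star_nonneg v),
    dotProduct_self_eq_zero]

lemma euclNorm_smul (c : ℝ) (v : n → ℝ) : euclNorm (c • v) = |c| * euclNorm v := by
  rw [euclNorm, smul_dotProduct, dotProduct_smul, smul_smul, smul_eq_mul,
    Real.sqrt_mul (mul_self_nonneg c), Real.sqrt_mul_self_eq_abs, euclNorm]

lemma euclNorm_mulVec_le (M : Matrix m n ℝ) (x : n → ℝ) :
    euclNorm (M *ᵥ x) ≤ frobNorm M * euclNorm x := by
  rw [euclNorm_eq_sqrt_sum_sq, euclNorm_eq_sqrt_sum_sq, frobNorm,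
    ← Real.sqrt_mul (by positivity), Finset.sum_mul]
  gcongr with i
  exact Finset.sum_mul_sq_le_sq_mul_sq _ _ _

lemma sum_sq_eq_trace_transpose_mul (M : Matrix m n ℝ) :
    ∑ i, ∑ j, M i j ^ 2 = trace (Mᵀ * M) := by
  rw [Finset.sum_comm]
  simp only [trace, diag_apply, mul_apply, transpose_apply, sq]

lemma frobNorm_orthogonal_mul [DecidableEq m] {V : Matrix m m ℝ} (hV : Vᵀ * V = 1)
    (M : Matrix m n ℝ) :
    frobNorm (V * M) = frobNorm M := by
  simp only [frobNorm, sum_sq_eq_trace_transpose_mul, transpose_mul, Matrix.mul_assoc,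
    ← Matrix.mul_assoc Vᵀ, hV, Matrix.one_mul]

lemma frobNorm_submatrix_le {l : Type*} [Fintype l] (M : Matrix m n ℝ) {f : l → m}
    (hf : Function.Injective f) : frobNorm (M.submatrix f id) ≤ frobNorm M := by
  refine Real.sqrt_le_sqrt ?_
  calc ∑ i, ∑ j, M.submatrix f id i j ^ 2
      = ∑ i ∈ Finset.univ.map ⟨f, hf⟩, ∑ j, M i j ^ 2 := by rw [Finset.sum_map]; rfl
    _ ≤ ∑ i, ∑ j, M i j ^ 2 :=
      Finset.sum_le_sum_of_subset_of_nonneg (Finset.subset_univ _)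
        fun _ _ _ => by positivity

end Norms

section SigmaMin

variable {m n : Type*} [Fintype m] [Fintype n]

lemma sigmaMin_nonneg (M : Matrix m n ℝ) : 0 ≤ sigmaMin M :=
  Real.sInf_nonneg fun _ ⟨_, _, ht⟩ => ht ▸ euclNorm_nonneg _

lemma sigmaMin_of_isEmpty [IsEmpty n] (M : Matrix m n ℝ) : sigmaMin M = 0 := by
  have hx (x : n → ℝ) : euclNorm x ≠ 1 := by simp [euclNorm]
  simp [sigmaMin, hx]

lemma sigmaMin_le (M : Matrix m n ℝ) {x : n → ℝ} (hx : euclNorm x = 1) :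
    sigmaMin M ≤ euclNorm (M *ᵥ x) :=
  csInf_le ⟨0, fun _ ⟨_, _, ht⟩ => ht ▸ euclNorm_nonneg _⟩ ⟨x, hx, rfl⟩

lemma sigmaMin_mul_euclNorm_le (M : Matrix m n ℝ) (y : n → ℝ) :
    sigmaMin M * euclNorm y ≤ euclNorm (M *ᵥ y) := by
  rcases eq_or_ne y 0 with rfl | hy
  · simp [euclNorm_eq_zero_iff.2 rfl]
  have hpos : 0 < euclNorm y :=
    (euclNorm_nonneg y).lt_of_ne' (mt euclNorm_eq_zero_iff.1 hy)
  have hunit : euclNorm ((euclNorm y)⁻¹ • y) = 1 := by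
    rw [euclNorm_smul, abs_of_pos (inv_pos.2 hpos), inv_mul_cancel₀ hpos.ne']
  have h := sigmaMin_le M hunit
  rw [mulVec_smul, euclNorm_smul, abs_of_pos (inv_pos.2 hpos), le_inv_mul_iff₀' hpos] at h
  exact h

lemma le_sigmaMin [Nonempty n] [DecidableEq n] (M : Matrix m n ℝ) {c : ℝ}
    (h : ∀ x : n → ℝ, euclNorm x = 1 → c ≤ euclNorm (M *ᵥ x)) : c ≤ sigmaMin M := by
  have hunit : euclNorm (Pi.single (Classical.arbitrary n) 1 : n → ℝ) = 1 := by
    simp [euclNorm]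
  exact le_csInf ⟨_, _, hunit, rfl⟩ fun _ ⟨x, hx, ht⟩ => ht ▸ h x hx

lemma sigmaMin_div_le_sigmaMin_mul_inv [DecidableEq n] (B : Matrix m n ℝ)
    {R : Matrix n n ℝ} (hR : IsUnit R) {F : ℝ} (hF : frobNorm R ≤ F) :
    sigmaMin B / F ≤ sigmaMin (B * R⁻¹) := by
  rcases isEmpty_or_nonempty n with _ | _
  · rw [sigmaMin_of_isEmpty, zero_div]
    exact sigmaMin_nonneg _
  have hdet : IsUnit R.det := (isUnit_iff_isUnit_det R).1 hR
  refine le_sigmaMin _ fun x hx => ?_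
  set y := R⁻¹ *ᵥ x
  have hRy : R *ᵥ y = x := by rw [mulVec_mulVec, mul_nonsing_inv _ hdet, one_mulVec]
  have hFy : 1 ≤ F * euclNorm y :=
    calc 1 = euclNorm (R *ᵥ y) := by rw [hRy, hx]
      _ ≤ frobNorm R * euclNorm y := euclNorm_mulVec_le R y
      _ ≤ F * euclNorm y := by gcongr; exact euclNorm_nonneg y
  have hFpos : 0 < F := by nlinarith [euclNorm_nonneg y]
  calc sigmaMin B / F ≤ sigmaMin B * euclNorm y := by
        rw [div_le_iff₀ hFpos]; nlinarith [sigmaMin_nonneg B]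
    _ ≤ euclNorm (B *ᵥ y) := sigmaMin_mul_euclNorm_le B y
    _ = euclNorm ((B * R⁻¹) *ᵥ x) := by rw [mulVec_mulVec]

end SigmaMin

lemma submatrix_castLE_mul_of_blockTriangular {α : Type*} [NonUnitalNonAssocSemiring α]
    {n r : ℕ} (h : r ≤ n) (V R : Matrix (Fin n) (Fin n) α) (hR : R.BlockTriangular id) :
    (V * R).submatrix (Fin.castLE h) (Fin.castLE h) =
      V.submatrix (Fin.castLE h) (Fin.castLE h) * R.submatrix (Fin.castLE h) (Fin.castLE h) := by
  ext i j
  refine (Fintype.sum_of_injective _ (Fin.castLE_injective h) _ _ (fun k hk => ?_)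
    fun _ => rfl).symm
  have hjk : Fin.castLE h j < k := by
    rw [Fin.lt_def, Fin.val_castLE]
    by_contra! hkr
    exact hk ⟨⟨k, by omega⟩, rfl⟩
  exact mul_eq_zero_of_right _ (hR hjk)

theorem qr_leading_block_sigma_min_bound_general {n : ℕ} (r : ℕ) (hrn : r ≤ n)
    (B V R : Matrix (Fin n) (Fin n) ℝ)
    (hV : Vᵀ * V = 1) (hRtri : R.BlockTriangular id)
    (hQR : B = V * R)
    (hR11 : IsUnit (R.submatrix (Fin.castLE hrn) (Fin.castLE hrn))) :
    sigmaMin (B.submatrix (Fin.castLE hrn) (Fin.castLE hrn)) /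
        frobNorm (B.submatrix id (Fin.castLE hrn)) ≤
      sigmaMin (V.submatrix (Fin.castLE hrn) (Fin.castLE hrn)) := by
  set c := Fin.castLE hrn
  have hV₁ : V.submatrix c c = B.submatrix c c * (R.submatrix c c)⁻¹ := by
    rw [hQR, submatrix_castLE_mul_of_blockTriangular hrn V R hRtri,
      mul_nonsing_inv_cancel_right _ _ ((isUnit_iff_isUnit_det _).1 hR11)]
  have hF : frobNorm (R.submatrix c c) ≤ frobNorm (B.submatrix id c) :=
    calc frobNorm (R.submatrix c c) = frobNorm ((R.submatrix id c).submatrix c id) := rfl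
      _ ≤ frobNorm (R.submatrix id c) := frobNorm_submatrix_le _ (Fin.castLE_injective hrn)
      _ = frobNorm (V * R.submatrix id c) := (frobNorm_orthogonal_mul hV _).symm
      _ = frobNorm (B.submatrix id c) := by rw [hQR]; rfl
  rw [hV₁]
  exact sigmaMin_div_le_sigmaMin_mul_inv _ hR11 hF

/-- If `B = V·R` is a QR factorization (`V` orthogonal, `R` upper triangular)
and the leading `r×r` block of `R` is invertible, then
`σ_min(V(1:r,1:r)) ≥ σ_min(B(1:r,1:r)) / ‖B(1:n,1:r)‖_F`. -/
theorem qr_leading_block_sigma_min_bound {n : ℕ} (r : ℕ) (hr1 : 1 ≤ r) (hrn : r ≤ n)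
    (B V R : Matrix (Fin n) (Fin n) ℝ)
    (hV : Vᵀ * V = 1) (hRtri : R.BlockTriangular id)
    (hQR : B = V * R)
    (hR11 : IsUnit (R.submatrix (Fin.castLE hrn) (Fin.castLE hrn))) :
    sigmaMin (B.submatrix (Fin.castLE hrn) (Fin.castLE hrn)) /
        frobNorm (B.submatrix id (Fin.castLE hrn)) ≤
      sigmaMin (V.submatrix (Fin.castLE hrn) (Fin.castLE hrn)) :=
  qr_leading_block_sigma_min_bound_general r hrn B V R hV hRtri hQR hR11
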